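/- arXiv:math/0408380 — 2 statements merged into one kernel-verified Lean document; each statement's English description precedes it below -/
import Mathlib

section
/- Let q₀ and q be coprime natural numbers with q₀ ≥ 2 and q ≥ 2, and let γ₀, γ be complex numbers. Then the two sets {γ₀ + 2πik/log q₀ : k ∈ ℤ} and {γ + 2πim/log q : m ∈ ℤ} of complex numbers intersect in at most one point. Equivalently, there do not exist integers l₁ ≠ l₂ and integers m₁, m₂ such that γ₀ + 2πi l_j/log q₀ = γ + 2πi m_j/log q for j = 1, 2. -/
lemma key_aux (q₀ q : ℕ) (hcop : Nat.Coprime q₀ q) (hq₀ : 2 ≤ q₀) (hq : 2 ≤ q)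
    (a b : ℤ) (ha : 0 < a) (h : (a : ℝ) * Real.log q = (b : ℝ) * Real.log q₀) : False := by
  have hq₀1 : (1 : ℝ) < q₀ := by exact_mod_cast Nat.lt_of_lt_of_le one_lt_two hq₀
  have hq1 : (1 : ℝ) < q := by exact_mod_cast Nat.lt_of_lt_of_le one_lt_two hq
  have hlq₀ : 0 < Real.log q₀ := Real.log_pos hq₀1
  have hlq : 0 < Real.log q := Real.log_pos hq1
  have hb : 0 < b := by
    have : (0:ℝ) < (b:ℝ) * Real.log q₀ := by
      rw [← h]; positivity
    by_contra hb'
    push_neg at hb'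
    have : (b:ℝ) ≤ 0 := by exact_mod_cast hb'
    nlinarith
  have hzpow : ((q:ℝ)) ^ a = ((q₀:ℝ)) ^ b := by
    have h1 : Real.log ((q:ℝ) ^ a) = Real.log ((q₀:ℝ) ^ b) := by
      rw [Real.log_zpow, Real.log_zpow]; exact h
    have hp1 : (0:ℝ) < (q:ℝ) ^ a := zpow_pos (by linarith) _
    have hp2 : (0:ℝ) < (q₀:ℝ) ^ b := zpow_pos (by linarith) _
    exact Real.log_injOn_pos (Set.mem_Ioi.mpr hp1) (Set.mem_Ioi.mpr hp2) h1
  have hnat : q ^ a.toNat = q₀ ^ b.toNat := by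
    have : ((q ^ a.toNat : ℕ) : ℝ) = ((q₀ ^ b.toNat : ℕ) : ℝ) := by
      push_cast
      rw [← zpow_natCast, ← zpow_natCast, Int.toNat_of_nonneg ha.le, Int.toNat_of_nonneg hb.le]
      exact hzpow
    exact_mod_cast this
  have hcop' : Nat.Coprime (q₀ ^ b.toNat) (q ^ a.toNat) := hcop.pow _ _
  rw [← hnat] at hcop'
  rw [Nat.Coprime, Nat.gcd_self] at hcop'
  have hle : 2 ≤ q ^ a.toNat := by
    calc 2 ≤ q := hq
    _ = q ^ 1 := (pow_one q).symm
    _ ≤ q ^ a.toNat := Nat.pow_le_pow_right (by omega) (by omega)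
  omega

lemma key (q₀ q : ℕ) (hcop : Nat.Coprime q₀ q) (hq₀ : 2 ≤ q₀) (hq : 2 ≤ q)
    (a b : ℤ) (h : (a : ℝ) * Real.log q = (b : ℝ) * Real.log q₀) : a = 0 := by
  by_contra ha
  rcases lt_or_gt_of_ne ha with hlt | hgt
  · exact key_aux q₀ q hcop hq₀ hq (-a) (-b) (by omega) (by push_cast; linarith)
  · exact key_aux q₀ q hcop hq₀ hq a b hgt h

/-- For coprime `q₀, q ≥ 2` and complex numbers `γ₀, γ`, the arithmetic progressions
`{γ₀ + 2πik/log q₀ : k ∈ ℤ}` and `{γ + 2πim/log q : m ∈ ℤ}` meet in at most one point. -/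
theorem progressions_intersect_in_at_most_one_point
    (q₀ q : ℕ) (hcop : Nat.Coprime q₀ q) (hq₀ : 2 ≤ q₀) (hq : 2 ≤ q) (γ₀ γ : ℂ) :
    Set.Subsingleton
      ({z : ℂ | ∃ k : ℤ, z = γ₀ + ((2 * Real.pi * k / Real.log q₀ : ℝ) : ℂ) * Complex.I} ∩
       {z : ℂ | ∃ m : ℤ, z = γ + ((2 * Real.pi * m / Real.log q : ℝ) : ℂ) * Complex.I}) := by
  rintro z ⟨⟨k₁, hz1⟩, ⟨m₁, hz2⟩⟩ w ⟨⟨k₂, hw1⟩, ⟨m₂, hw2⟩⟩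
  have hq₀1 : (1 : ℝ) < q₀ := by exact_mod_cast Nat.lt_of_lt_of_le one_lt_two hq₀
  have hq1 : (1 : ℝ) < q := by exact_mod_cast Nat.lt_of_lt_of_le one_lt_two hq
  have hlq₀ : Real.log q₀ ≠ 0 := ne_of_gt (Real.log_pos hq₀1)
  have hlq : Real.log q ≠ 0 := ne_of_gt (Real.log_pos hq1)
  have hdiff : ((2 * Real.pi * k₁ / Real.log q₀ - 2 * Real.pi * k₂ / Real.log q₀ : ℝ) : ℂ) * Complex.I
      = ((2 * Real.pi * m₁ / Real.log q - 2 * Real.pi * m₂ / Real.log q : ℝ) : ℂ) * Complex.I := by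
    have h1 := hz1.symm.trans hz2
    have h2 := hw1.symm.trans hw2
    push_cast
    push_cast at h1 h2
    linear_combination h1 - h2
  have hre : (2 * Real.pi * k₁ / Real.log q₀ - 2 * Real.pi * k₂ / Real.log q₀ : ℝ)
      = (2 * Real.pi * m₁ / Real.log q - 2 * Real.pi * m₂ / Real.log q : ℝ) := by
    have := mul_right_cancel₀ Complex.I_ne_zero hdiff
    exact_mod_cast this
  have hπ : Real.pi ≠ 0 := Real.pi_ne_zero
  have heq : ((k₁ - k₂ : ℤ) : ℝ) * Real.log q = ((m₁ - m₂ : ℤ) : ℝ) * Real.log q₀ := by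
    push_cast
    field_simp at hre
    have hre' : (2 * Real.pi) * (((k₁:ℝ) - k₂) * Real.log q)
        = (2 * Real.pi) * (((m₁:ℝ) - m₂) * Real.log q₀) := by linear_combination (2 * Real.pi) * hre
    have h2π : (2 * Real.pi : ℝ) ≠ 0 := by positivity
    exact mul_left_cancel₀ h2π hre'
  have hk : k₁ - k₂ = 0 := key q₀ q hcop hq₀ hq _ _ heq
  have : k₁ = k₂ := by omega
  rw [hz1, hw1, this]
end

section
/- Let q₀ ≥ 2 be a natural number and γ₀ a complex number. Let J be a finite index set, and for each j ∈ J let q_j ≥ 2 be a natural number coprime to q₀ and γ_j a complex number. Then the intersection of the set {γ₀ + 2πik/log q₀ : k ∈ ℤ} with the union over j ∈ J of the sets {γ_j + 2πim/log q_j : m ∈ ℤ} is finite. In particular, all but finitely many of the points γ₀ + 2πik/log q₀, k ∈ ℤ, lie outside this union. -/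
/-!
If the progressions `γ₀ + ℤ · 2πi / log q₀` and `γ + ℤ · 2πi / log q` had two common points,
their difference would give `k log q = m log q₀` with `k ≠ 0`, i.e. `q ^ k = q₀ ^ m`; this is
impossible for coprime `q₀` and `q ≥ 2`, since a prime factor of `q` does not divide `q₀`. So the
intersection is a finite union of sets with at most one point each.
-/

open Complex Real

theorem Nat.Coprime.eq_zero_of_zpow_eq_zpow {a b : ℕ} (hab : a.Coprime b) (hb : 1 < b) {K M : ℤ}
    (h : (b : ℚ) ^ K = (a : ℚ) ^ M) : K = 0 := by
  have hb₀ : b ≠ 0 := by omega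
  set p := b.minFac
  have hp : Fact p.Prime := ⟨Nat.minFac_prime hb.ne'⟩
  have hpb : padicValNat p b ≠ 0 :=
    ((dvd_iff_padicValNat_ne_zero hb₀).mp (Nat.minFac_dvd b))
  have hpa : padicValNat p a = 0 :=
    padicValNat.eq_zero_of_not_dvd fun hpa =>
      (Nat.Prime.coprime_iff_not_dvd hp.out).mp (hab.coprime_dvd_left hpa) (Nat.minFac_dvd b)
  have hval := congrArg (padicValRat p) h
  simp only [padicValRat.zpow, padicValRat.of_nat, hpa, Nat.cast_zero, mul_zero] at hval
  simpa [hpb] using hval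

theorem Nat.Coprime.eq_zero_of_int_mul_log_eq {a b : ℕ} (hab : a.Coprime b) (hb : 1 < b)
    {K M : ℤ} (h : K * Real.log b = M * Real.log a) : K = 0 := by
  have ha : (0 : ℝ) < a := by
    rw [Nat.cast_pos, Nat.pos_iff_ne_zero]
    rintro rfl
    exact hb.ne' (Nat.coprime_zero_left b |>.mp hab)
  have hb' : (0 : ℝ) < b := by positivity
  refine hab.eq_zero_of_zpow_eq_zpow (M := M) hb ?_
  have hpow : (b : ℝ) ^ K = (a : ℝ) ^ M := by
    refine Real.log_injOn_pos (zpow_pos hb' K) (zpow_pos ha M) ?_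
    rw [Real.log_zpow, Real.log_zpow, h]
  apply Rat.cast_injective (α := ℝ)
  push_cast
  exact hpow

theorem subsingleton_setOf_zsmul_inter_setOf_zsmul {G : Type*} [AddCommGroup G] (a b u v : G)
    (huv : ∀ K M : ℤ, K • u = M • v → K • u = 0) :
    ({z | ∃ k : ℤ, z = a + k • u} ∩ {z | ∃ m : ℤ, z = b + m • v}).Subsingleton := by
  rintro z ⟨⟨k, rfl⟩, m, hm⟩ z' ⟨⟨k', rfl⟩, m', hm'⟩
  have hkm : (k - k') • u = (m - m') • v := by
    rw [sub_smul, sub_smul, ← add_sub_add_left_eq_sub _ _ a, hm, hm', add_sub_add_left_eq_sub]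
  have hk := huv _ _ hkm
  rw [sub_smul, sub_eq_zero] at hk
  rw [hk]

theorem setOf_add_two_pi_int_div_mul_I_eq_zsmul (γ : ℂ) (L : ℝ) :
    {z : ℂ | ∃ k : ℤ, z = γ + ((2 * π * k / L : ℝ) : ℂ) * I} =
      {z | ∃ k : ℤ, z = γ + k • (((2 * π / L : ℝ) : ℂ) * I)} := by
  simp only [zsmul_eq_mul, mul_div_right_comm _ _ L, ofReal_mul, ofReal_intCast]
  simp only [mul_comm, mul_left_comm]

theorem Nat.Coprime.zsmul_two_pi_div_log_mul_I_eq_zero {a b : ℕ} (hab : a.Coprime b) (hb : 1 < b)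
    (K M : ℤ)
    (h : K • (((2 * π / Real.log a : ℝ) : ℂ) * I) =
      M • (((2 * π / Real.log b : ℝ) : ℂ) * I)) :
    K • (((2 * π / Real.log a : ℝ) : ℂ) * I) = 0 := by
  rcases eq_or_ne (Real.log a) 0 with ha | ha
  -- `a = 1`: then `2 * π / log a = 0` and the first progression is a single point.
  · simp [ha]
  have hlogb : Real.log b ≠ 0 :=
    Real.log_ne_zero_of_pos_of_ne_one (by positivity) (by exact_mod_cast hb.ne')
  have hre : (K : ℝ) * (2 * π / Real.log a) = M * (2 * π / Real.log b) := by
    rw [zsmul_eq_mul, zsmul_eq_mul, ← mul_assoc, ← mul_assoc] at h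
    exact_mod_cast mul_right_cancel₀ I_ne_zero h
  have hK : K = 0 := by
    refine hab.eq_zero_of_int_mul_log_eq (M := M) hb ?_
    field_simp at hre
    rw [hre, mul_comm]
  simp [hK]

theorem progression_meets_finitely_many_progressions_finitely_general
    (q₀ : ℕ) (γ₀ : ℂ) (J : Type*) [Fintype J]
    (q : J → ℕ) (hq : ∀ j, 2 ≤ q j) (hcop : ∀ j, Nat.Coprime q₀ (q j)) (γ : J → ℂ) :
    Set.Finite
      ({z : ℂ | ∃ k : ℤ, z = γ₀ + ((2 * Real.pi * k / Real.log q₀ : ℝ) : ℂ) * Complex.I} ∩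
       ⋃ j : J,
         {z : ℂ | ∃ m : ℤ, z = γ j + ((2 * Real.pi * m / Real.log (q j) : ℝ) : ℂ) * Complex.I}) := by
  rw [Set.inter_iUnion]
  refine Set.finite_iUnion fun j => Set.Subsingleton.finite ?_
  rw [setOf_add_two_pi_int_div_mul_I_eq_zsmul, setOf_add_two_pi_int_div_mul_I_eq_zsmul]
  exact subsingleton_setOf_zsmul_inter_setOf_zsmul _ _ _ _
    ((hcop j).zsmul_two_pi_div_log_mul_I_eq_zero (hq j))

/-- Let `q₀ ≥ 2`, and for each `j` in a finite index set let `q j ≥ 2` be coprime to `q₀`.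
Then the arithmetic progression `{γ₀ + 2πik/log q₀ : k ∈ ℤ}` meets the union of the
progressions `{γ j + 2πim/log (q j) : m ∈ ℤ}` in only finitely many points. -/
theorem progression_meets_finitely_many_progressions_finitely
    (q₀ : ℕ) (hq₀ : 2 ≤ q₀) (γ₀ : ℂ) (J : Type*) [Fintype J]
    (q : J → ℕ) (hq : ∀ j, 2 ≤ q j) (hcop : ∀ j, Nat.Coprime q₀ (q j)) (γ : J → ℂ) :
    Set.Finite
      ({z : ℂ | ∃ k : ℤ, z = γ₀ + ((2 * Real.pi * k / Real.log q₀ : ℝ) : ℂ) * Complex.I} ∩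
       ⋃ j : J,
         {z : ℂ | ∃ m : ℤ, z = γ j + ((2 * Real.pi * m / Real.log (q j) : ℝ) : ℂ) * Complex.I}) :=
  progression_meets_finitely_many_progressions_finitely_general q₀ γ₀ J q hq hcop γ
end
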